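/- Let A be a finite real linear arrangement satisfying the strong lattice property (P_C(A) is a lattice for every chamber C). Let C be a chamber, K a chamber with C ≤ K in P_C(A), and let A, B be atoms of the interval [C, K]. Then there exists an element T ∈ [C, K] with T = A ∨ B such that the interval [C, T] contains both A and B as its only atoms. -/

import Mathlib

open scoped Classical
noncomputable section

/-- Ambient real vector space `ℝ^d`. -/
abbrev EucV (d : ℕ) := Fin d → ℝ

/-- The complement of the arrangement given by the kernels of the linear forms in `A`. -/
def hypCompl {d : ℕ} (A : Finset (EucV d →ₗ[ℝ] ℝ)) : Set (EucV d) :=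
  {x | ∀ f ∈ A, f x ≠ 0}

/-- A chamber of the arrangement: a connected component of the complement. -/
def IsChamber {d : ℕ} (A : Finset (EucV d →ₗ[ℝ] ℝ)) (C : Set (EucV d)) : Prop :=
  ∃ x ∈ hypCompl A, C = connectedComponentIn (hypCompl A) x

/-- The hyperplane `ker f` separates `C` from `C'`. -/
def SepBy {d : ℕ} (f : EucV d →ₗ[ℝ] ℝ) (C C' : Set (EucV d)) : Prop :=
  ∃ x ∈ C, ∃ y ∈ C', f x * f y < 0

/-- The set `S(C,C')` of hyperplanes of `A` separating `C` from `C'`. -/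
def sepSet {d : ℕ} (A : Finset (EucV d →ₗ[ℝ] ℝ)) (C C' : Set (EucV d)) :
    Set (EucV d →ₗ[ℝ] ℝ) :=
  {f | f ∈ A ∧ SepBy f C C'}

/-!
Take `T = X ∨ Y`. An atom `Z` of `P_C(A)` is separated from `C` by a single hyperplane
(up to scaling): two non-proportional separating hyperplanes would be crossed at different
times by some segment from `C` to `Z`, and a chamber met between the two crossings would lie
strictly between `C` and `Z`. Hence distinct atoms have disjoint separating sets. If an atom
`Z ≠ X, Y` lay below `T`, then `X` and `Y` would lie below the chamber `-Z`, whose separating set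
is the complement of that of `Z`; so would `T ∧ (-Z)`, hence `T ≤ -Z`, and `Z ≤ T ≤ -Z`
forces `Z = C`.
-/

open Set

section
variable {d : ℕ} {A : Finset (EucV d →ₗ[ℝ] ℝ)} {C X Z : Set (EucV d)}
  {f g : EucV d →ₗ[ℝ] ℝ} {c x z : EucV d} {t : ℝ}

lemma mul_pos_of_mem_connectedComponentIn_hypCompl (hf : f ∈ A) (hc : c ∈ hypCompl A)
    (hx : x ∈ connectedComponentIn (hypCompl A) c) : 0 < f c * f x := by
  have hcont : ContinuousOn (fun w => f c * f w) (connectedComponentIn (hypCompl A) c) :=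
    (continuous_const.mul f.continuous_of_finiteDimensional).continuousOn
  by_contra! hle
  obtain ⟨w, hw, hw0⟩ := isPreconnected_connectedComponentIn.intermediate_value hx
    (mem_connectedComponentIn hc) hcont ⟨hle, mul_self_nonneg (f c)⟩
  exact mul_ne_zero (hc f hf) (connectedComponentIn_subset _ _ hw f hf) hw0

lemma connectedComponentIn_hypCompl_eq (hc : c ∈ hypCompl A) :
    connectedComponentIn (hypCompl A) c = {x | ∀ f ∈ A, 0 < f c * f x} := by
  refine Subset.antisymm (fun x hx f hf => mul_pos_of_mem_connectedComponentIn_hypCompl hf hc hx) ?_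
  have hconv : Convex ℝ {x | ∀ f ∈ A, 0 < f c * f x} := by
    rw [show {x | ∀ f ∈ A, 0 < f c * f x} = ⋂ f ∈ A, {x | 0 < f c * f x} by ext; simp]
    exact convex_iInter₂ fun f _ => convex_halfSpace_gt (f c • f).isLinear 0
  refine hconv.isPreconnected.subset_connectedComponentIn
    (fun f hf => mul_self_pos.mpr (hc f hf)) fun x hx f hf hfx => ?_
  simpa [hfx] using hx f hf

namespace IsChamber

lemma nonempty (hC : IsChamber A C) : C.Nonempty := by
  obtain ⟨c, hc, rfl⟩ := hC
  exact ⟨c, mem_connectedComponentIn hc⟩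

lemma subset_hypCompl (hC : IsChamber A C) : C ⊆ hypCompl A := by
  obtain ⟨c, -, rfl⟩ := hC
  exact connectedComponentIn_subset _ _

lemma eq_setOf (hC : IsChamber A C) (hc : c ∈ C) : C = {x | ∀ f ∈ A, 0 < f c * f x} := by
  obtain ⟨c₀, -, rfl⟩ := hC
  rw [connectedComponentIn_eq hc,
    connectedComponentIn_hypCompl_eq (connectedComponentIn_subset _ _ hc)]

lemma mul_pos (hC : IsChamber A C) (hf : f ∈ A) (hc : c ∈ C) (hx : x ∈ C) : 0 < f c * f x := by
  rw [hC.eq_setOf hc] at hx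
  exact hx f hf

lemma eq_of_mem (hX : IsChamber A X) (hZ : IsChamber A Z) (hxX : x ∈ X) (hxZ : x ∈ Z) : X = Z := by
  rw [hX.eq_setOf hxX, hZ.eq_setOf hxZ]

lemma eq_of_forall_mul_pos (hX : IsChamber A X) (hZ : IsChamber A Z) (hx : x ∈ X) (hz : z ∈ Z)
    (h : ∀ f ∈ A, 0 < f x * f z) : X = Z := by
  refine hX.eq_of_mem hZ ?_ hz
  rw [hX.eq_setOf hx]
  exact h

lemma isOpen (hC : IsChamber A C) : IsOpen C := by
  obtain ⟨c, hc⟩ := hC.nonempty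
  rw [hC.eq_setOf hc, show {x | ∀ f ∈ A, 0 < f c * f x} = ⋂ f ∈ A, {x | 0 < f c * f x} by
    ext; simp]
  exact isOpen_biInter_finset fun f _ => isOpen_lt continuous_const
    (continuous_const.mul (LinearMap.continuous_of_finiteDimensional f))

lemma linearMap_ext (hC : IsChamber A C) {h k : EucV d →ₗ[ℝ] ℝ} (hhk : ∀ c ∈ C, h c = k c) :
    h = k := by
  obtain ⟨c, hc⟩ := hC.nonempty
  have hint : (interior (LinearMap.ker (h - k) : Set (EucV d))).Nonempty :=
    ⟨c, mem_interior.mpr ⟨C, fun x hx => by simp [hhk x hx], hC.isOpen, hc⟩⟩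
  exact sub_eq_zero.mp <| LinearMap.ker_eq_top.mp <|
    (LinearMap.ker (h - k)).eq_top_of_nonempty_interior' hint

end IsChamber

lemma mem_sepSet_iff (hC : IsChamber A C) (hZ : IsChamber A Z) (hc : c ∈ C) (hz : z ∈ Z) :
    f ∈ sepSet A C Z ↔ f ∈ A ∧ f c * f z < 0 := by
  refine ⟨fun ⟨hf, x, hx, y, hy, hxy⟩ => ⟨hf, ?_⟩, fun ⟨hf, hcz⟩ => ⟨hf, c, hc, z, hz, hcz⟩⟩
  have hcx := hC.mul_pos hf hc hx
  have hyz := hZ.mul_pos hf hy hz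
  nlinarith

lemma mul_pos_iff_notMem_sepSet (hC : IsChamber A C) (hZ : IsChamber A Z) (hc : c ∈ C)
    (hz : z ∈ Z) (hf : f ∈ A) : 0 < f c * f z ↔ f ∉ sepSet A C Z := by
  have hcz : f c * f z ≠ 0 := mul_ne_zero (hC.subset_hypCompl hc f hf) (hZ.subset_hypCompl hz f hf)
  rw [mem_sepSet_iff hC hZ hc hz, not_and, not_lt]
  exact ⟨fun h _ => h.le, fun h => (h hf).lt_of_ne' hcz⟩

lemma sepSet_self (hC : IsChamber A C) : sepSet A C C = ∅ := by
  obtain ⟨c, hc⟩ := hC.nonempty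
  ext f
  simp [mem_sepSet_iff hC hC hc hc, (mul_self_nonneg (f c)).not_gt]

lemma eq_of_sepSet_eq (hC : IsChamber A C) (hX : IsChamber A X) (hZ : IsChamber A Z)
    (h : sepSet A C X = sepSet A C Z) : X = Z := by
  obtain ⟨c, hc⟩ := hC.nonempty
  obtain ⟨x, hx⟩ := hX.nonempty
  obtain ⟨z, hz⟩ := hZ.nonempty
  refine hX.eq_of_forall_mul_pos hZ hx hz fun f hf => ?_
  have hsign : 0 < f c * f x * (f c * f z) := by
    by_cases hfX : f ∈ sepSet A C X
    · exact mul_pos_of_neg_of_neg ((mem_sepSet_iff hC hX hc hx).1 hfX).2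
        ((mem_sepSet_iff hC hZ hc hz).1 (h ▸ hfX)).2
    · exact mul_pos ((mul_pos_iff_notMem_sepSet hC hX hc hx hf).2 hfX)
        ((mul_pos_iff_notMem_sepSet hC hZ hc hz hf).2 (h ▸ hfX))
  exact pos_of_mul_pos_right (a := f c * f c) (by linarith) (mul_self_nonneg _)

/-- `Z'` is the chamber of `-z` for any `z ∈ Z`. -/
lemma exists_sepSet_eq_diff (hC : IsChamber A C) (hZ : IsChamber A Z) :
    ∃ Z', IsChamber A Z' ∧ sepSet A C Z' = (A : Set (EucV d →ₗ[ℝ] ℝ)) \ sepSet A C Z := by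
  obtain ⟨c, hc⟩ := hC.nonempty
  obtain ⟨z, hz⟩ := hZ.nonempty
  have hneg : -z ∈ hypCompl A := fun f hf => by simpa using hZ.subset_hypCompl hz f hf
  refine ⟨_, ⟨-z, hneg, rfl⟩, ?_⟩
  ext f
  rw [mem_sepSet_iff hC ⟨-z, hneg, rfl⟩ hc (mem_connectedComponentIn hneg), mem_sdiff,
    map_neg, mul_neg, neg_lt_zero]
  exact and_congr_right fun hf => mul_pos_iff_notMem_sepSet hC hZ hc hz hf

/-- The parameter `t` at which the segment `t ↦ (1 - t) • c + t • z` meets `ker f`. -/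
def crossingParam (f : EucV d →ₗ[ℝ] ℝ) (c z : EucV d) : ℝ := f c / (f c - f z)

lemma apply_segment (f : EucV d →ₗ[ℝ] ℝ) (c z : EucV d) (t : ℝ) :
    f ((1 - t) • c + t • z) = (1 - t) * f c + t * f z := by
  simp

lemma mul_sub_pos_of_mul_neg {a b : ℝ} (h : a * b < 0) : 0 < a * (a - b) := by
  nlinarith [mul_self_nonneg a]

lemma mul_apply_segment_eq (hcz : f c * f z < 0) (t : ℝ) :
    f c * f ((1 - t) • c + t • z) = f c * (f c - f z) * (crossingParam f c z - t) := by
  have hne : f c - f z ≠ 0 := right_ne_zero_of_mul (mul_sub_pos_of_mul_neg hcz).ne'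
  rw [apply_segment, crossingParam]
  field_simp
  ring

lemma mul_apply_segment_pos_iff (hcz : f c * f z < 0) :
    0 < f c * f ((1 - t) • c + t • z) ↔ t < crossingParam f c z := by
  rw [mul_apply_segment_eq hcz, mul_pos_iff_of_pos_left (mul_sub_pos_of_mul_neg hcz), sub_pos]

lemma mul_apply_segment_neg_iff (hcz : f c * f z < 0) :
    f c * f ((1 - t) • c + t • z) < 0 ↔ crossingParam f c z < t := by
  rw [mul_apply_segment_eq hcz, ← smul_eq_mul,
    smul_neg_iff_of_pos_left (mul_sub_pos_of_mul_neg hcz), sub_neg]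

lemma crossingParam_mem_Ioo (hcz : f c * f z < 0) : crossingParam f c z ∈ Ioo 0 1 := by
  refine ⟨(mul_apply_segment_pos_iff hcz).1 ?_, (mul_apply_segment_neg_iff hcz).1 ?_⟩
  · simpa using mul_self_pos.mpr (show f c ≠ 0 by rintro h; simp [h] at hcz)
  · simpa using hcz

lemma mul_apply_segment_pos (hcz : 0 < f c * f z) (ht : t ∈ Icc 0 1) :
    0 < f c * f ((1 - t) • c + t • z) := by
  have hc : 0 < f c * f c := mul_self_pos.mpr (by rintro h; simp [h] at hcz)
  rw [apply_segment]
  rcases ht.2.lt_or_eq with ht1 | rfl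
  · nlinarith [mul_pos (sub_pos.mpr ht1) hc, mul_nonneg ht.1 hcz.le]
  · simpa using hcz

/-- `W` is the chamber of a point of the segment from `c` to `z` lying between its crossings
with `ker f` and `ker g` and off every other hyperplane of `A`. -/
lemma exists_chamber_between (hC : IsChamber A C) (hZ : IsChamber A Z) (hc : c ∈ C) (hz : z ∈ Z)
    (hf : f ∈ sepSet A C Z) (hg : g ∈ sepSet A C Z)
    (hfg : crossingParam f c z < crossingParam g c z) :
    ∃ W, IsChamber A W ∧ f ∈ sepSet A C W ∧ g ∉ sepSet A C W ∧ sepSet A C W ⊆ sepSet A C Z := by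
  have hcross : ∀ {h}, h ∈ sepSet A C Z → h c * h z < 0 := fun hh =>
    ((mem_sepSet_iff hC hZ hc hz).1 hh).2
  obtain ⟨t, ⟨hft, htg⟩, ht⟩ :=
    (Ioo_infinite hfg).exists_notMem_finset (A.image fun h => crossingParam h c z)
  have ht01 : t ∈ Icc 0 1 :=
    ⟨(crossingParam_mem_Ioo (hcross hf)).1.trans hft |>.le,
      htg.trans (crossingParam_mem_Ioo (hcross hg)).2 |>.le⟩
  set p := (1 - t) • c + t • z
  have hsame : ∀ h ∈ A, h ∉ sepSet A C Z → 0 < h c * h p := fun h hh hhZ =>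
    mul_apply_segment_pos ((mul_pos_iff_notMem_sepSet hC hZ hc hz hh).2 hhZ) ht01
  have hp : p ∈ hypCompl A := by
    intro h hh hp0
    by_cases hhZ : h ∈ sepSet A C Z
    · have := mul_apply_segment_eq (hcross hhZ) t
      rw [hp0, mul_zero, eq_comm] at this
      rcases mul_eq_zero.1 this with h1 | h1
      · exact (mul_sub_pos_of_mul_neg (hcross hhZ)).ne' h1
      · exact ht (Finset.mem_image.2 ⟨h, hh, (sub_eq_zero.1 h1)⟩)
    · simpa [hp0] using hsame h hh hhZ
  have hW : IsChamber A (connectedComponentIn (hypCompl A) p) := ⟨p, hp, rfl⟩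
  have hsepW : ∀ h, h ∈ sepSet A C _ ↔ h ∈ A ∧ h c * h p < 0 := fun h =>
    mem_sepSet_iff hC hW hc (mem_connectedComponentIn hp)
  refine ⟨_, hW, (hsepW _).2 ⟨hf.1, (mul_apply_segment_neg_iff (hcross hf)).2 hft⟩,
    fun hgW => ((hsepW _).1 hgW).2.not_gt ((mul_apply_segment_pos_iff (hcross hg)).2 htg),
    fun h hhW => ?_⟩
  by_contra hhZ
  exact ((hsepW _).1 hhW).2.not_gt (hsame h ((hsepW _).1 hhW).1 hhZ)

/-- No chamber lies strictly between `C` and `Z` in `P_C(A)`; with `Z ≠ C`, `Z` is an atom. -/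
def NoChamberBetween (A : Finset (EucV d →ₗ[ℝ] ℝ)) (C Z : Set (EucV d)) : Prop :=
  ¬ ∃ W : Set (EucV d), IsChamber A W ∧ W ≠ C ∧ W ≠ Z ∧ sepSet A C W ⊆ sepSet A C Z

namespace NoChamberBetween

lemma crossingParam_eq (hZa : NoChamberBetween A C Z) (hC : IsChamber A C) (hZ : IsChamber A Z)
    (hc : c ∈ C) (hz : z ∈ Z) (hf : f ∈ sepSet A C Z) (hg : g ∈ sepSet A C Z) :
    crossingParam f c z = crossingParam g c z := by
  have key : ∀ {f g}, f ∈ sepSet A C Z → g ∈ sepSet A C Z →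
      ¬ crossingParam f c z < crossingParam g c z := by
    intro f g hf hg hfg
    obtain ⟨W, hW, hfW, hgW, hWZ⟩ := exists_chamber_between hC hZ hc hz hf hg hfg
    refine hZa ⟨W, hW, ?_, ?_, hWZ⟩
    · rintro rfl
      simp [sepSet_self hC] at hfW
    · rintro rfl
      exact hgW hg
  exact le_antisymm (not_lt.1 (key hg hf)) (not_lt.1 (key hf hg))

/-- Comparing crossing parameters at every point of the open set `C` gives `g z • f = f z • g`. -/
lemma exists_eq_smul (hZa : NoChamberBetween A C Z) (hC : IsChamber A C) (hZ : IsChamber A Z)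
    (hf : f ∈ sepSet A C Z) (hg : g ∈ sepSet A C Z) : ∃ l : ℝ, l ≠ 0 ∧ g = l • f := by
  obtain ⟨z, hz⟩ := hZ.nonempty
  have hfz : f z ≠ 0 := hZ.subset_hypCompl hz f hf.1
  have hgz : g z ≠ 0 := hZ.subset_hypCompl hz g hg.1
  have hprop : g z • f = f z • g := hC.linearMap_ext fun c hc => by
    have hcross : ∀ {h}, h ∈ sepSet A C Z → h c - h z ≠ 0 := fun hh =>
      right_ne_zero_of_mul (mul_sub_pos_of_mul_neg ((mem_sepSet_iff hC hZ hc hz).1 hh).2).ne'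
    have := hZa.crossingParam_eq hC hZ hc hz hf hg
    rw [crossingParam, crossingParam, div_eq_div_iff (hcross hf) (hcross hg)] at this
    simp only [LinearMap.smul_apply, smul_eq_mul]
    linarith
  refine ⟨g z / f z, div_ne_zero hgz hfz, LinearMap.ext fun v => ?_⟩
  have := LinearMap.congr_fun hprop v
  simp only [LinearMap.smul_apply, smul_eq_mul] at this ⊢
  field_simp
  linarith

lemma sepSet_subset (hXa : NoChamberBetween A C X) (hC : IsChamber A C) (hX : IsChamber A X)
    (hZ : IsChamber A Z) (hfX : f ∈ sepSet A C X) (hfZ : f ∈ sepSet A C Z) :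
    sepSet A C X ⊆ sepSet A C Z := by
  obtain ⟨c, hc⟩ := hC.nonempty
  obtain ⟨z, hz⟩ := hZ.nonempty
  intro g hgX
  obtain ⟨l, hl, rfl⟩ := hXa.exists_eq_smul hC hX hfX hgX
  have hfcz := ((mem_sepSet_iff hC hZ hc hz).1 hfZ).2
  refine (mem_sepSet_iff hC hZ hc hz).2 ⟨hgX.1, ?_⟩
  simp only [LinearMap.smul_apply, smul_eq_mul]
  nlinarith [mul_self_pos.mpr hl]

lemma disjoint_sepSet (hXa : NoChamberBetween A C X) (hZa : NoChamberBetween A C Z)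
    (hC : IsChamber A C) (hX : IsChamber A X) (hZ : IsChamber A Z) (hXZ : X ≠ Z) :
    Disjoint (sepSet A C X) (sepSet A C Z) :=
  disjoint_left.2 fun _ hfX hfZ => hXZ <| eq_of_sepSet_eq hC hX hZ <|
    (hXa.sepSet_subset hC hX hZ hfX hfZ).antisymm (hZa.sepSet_subset hC hZ hX hfZ hfX)

end NoChamberBetween

end

theorem join_of_atoms_elementary_general {d : ℕ} (A : Finset (EucV d →ₗ[ℝ] ℝ))
    (hSL : ∀ C₀ : Set (EucV d), IsChamber A C₀ → ∀ X Y : Set (EucV d),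
      IsChamber A X → IsChamber A Y →
      (∃ J : Set (EucV d), IsChamber A J ∧
        sepSet A C₀ X ⊆ sepSet A C₀ J ∧ sepSet A C₀ Y ⊆ sepSet A C₀ J ∧
        ∀ Z : Set (EucV d), IsChamber A Z → sepSet A C₀ X ⊆ sepSet A C₀ Z →
          sepSet A C₀ Y ⊆ sepSet A C₀ Z → sepSet A C₀ J ⊆ sepSet A C₀ Z) ∧
      (∃ M : Set (EucV d), IsChamber A M ∧
        sepSet A C₀ M ⊆ sepSet A C₀ X ∧ sepSet A C₀ M ⊆ sepSet A C₀ Y ∧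
        ∀ Z : Set (EucV d), IsChamber A Z → sepSet A C₀ Z ⊆ sepSet A C₀ X →
          sepSet A C₀ Z ⊆ sepSet A C₀ Y → sepSet A C₀ Z ⊆ sepSet A C₀ M))
    (C K X Y : Set (EucV d))
    (hC : IsChamber A C) (hK : IsChamber A K) (hX : IsChamber A X) (hY : IsChamber A Y)
    -- `X` and `Y` are atoms of the interval `[C, K]`:
    (hXatom : X ≠ C ∧ sepSet A C X ⊆ sepSet A C K ∧
      ¬ ∃ W : Set (EucV d), IsChamber A W ∧ W ≠ C ∧ W ≠ X ∧ sepSet A C W ⊆ sepSet A C X)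
    (hYatom : Y ≠ C ∧ sepSet A C Y ⊆ sepSet A C K ∧
      ¬ ∃ W : Set (EucV d), IsChamber A W ∧ W ≠ C ∧ W ≠ Y ∧ sepSet A C W ⊆ sepSet A C Y) :
    ∃ T : Set (EucV d), IsChamber A T ∧
      -- `T ∈ [C, K]`
      sepSet A C T ⊆ sepSet A C K ∧
      -- `T` is the join `X ∨ Y` in `P_C(A)`
      sepSet A C X ⊆ sepSet A C T ∧ sepSet A C Y ⊆ sepSet A C T ∧
      (∀ Z : Set (EucV d), IsChamber A Z → sepSet A C X ⊆ sepSet A C Z →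
        sepSet A C Y ⊆ sepSet A C Z → sepSet A C T ⊆ sepSet A C Z) ∧
      -- `X` and `Y` are the only atoms of `[C, T]`
      (∀ Z : Set (EucV d), IsChamber A Z →
        ((Z ≠ C ∧ sepSet A C Z ⊆ sepSet A C T ∧
          ¬ ∃ W : Set (EucV d), IsChamber A W ∧ W ≠ C ∧ W ≠ Z ∧
            sepSet A C W ⊆ sepSet A C Z) ↔ (Z = X ∨ Z = Y))) := by
  obtain ⟨hXC, hXK, hXa⟩ := hXatom
  obtain ⟨hYC, hYK, hYa⟩ := hYatom
  obtain ⟨⟨T, hT, hXT, hYT, hTmin⟩, -⟩ := hSL C hC X Y hX hY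
  refine ⟨T, hT, hTmin K hK hXK hYK, hXT, hYT, hTmin, fun Z hZ => ⟨?_, ?_⟩⟩
  · rintro ⟨hZC, hZT, hZa⟩
    by_contra! ⟨hZX, hZY⟩
    obtain ⟨Z', hZ', hZ'eq⟩ := exists_sepSet_eq_diff hC hZ
    have below_Z' : ∀ {W}, IsChamber A W → NoChamberBetween A C W → W ≠ Z →
        sepSet A C W ⊆ sepSet A C Z' := fun hW hWa hWZ => hZ'eq ▸ subset_sdiff.2
      ⟨fun _ hf => hf.1, hWa.disjoint_sepSet hZa hC hW hZ hWZ⟩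
    obtain ⟨-, M, hM, -, hMZ', hMmax⟩ := hSL C hC T Z' hT hZ'
    have hTM : sepSet A C T ⊆ sepSet A C M := hTmin M hM
      (hMmax X hX hXT (below_Z' hX hXa hZX.symm)) (hMmax Y hY hYT (below_Z' hY hYa hZY.symm))
    have hTZ' := hTM.trans hMZ'
    have hZempty : sepSet A C Z = ∅ := subset_empty_iff.1 fun f hf => by
      have hfZ' := hTZ' (hZT hf)
      rw [hZ'eq] at hfZ'
      exact hfZ'.2 hf
    exact hZC (eq_of_sepSet_eq hC hZ hC (hZempty.trans (sepSet_self hC).symm))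
  · rintro (rfl | rfl)
    exacts [⟨hXC, hXT, hXa⟩, ⟨hYC, hYT, hYa⟩]

/-- In an arrangement with the strong lattice property, for atoms `X`, `Y` of an interval
`[C, K]` of `P_C(A)` there is `T = X ∨ Y ∈ [C, K]` such that `X` and `Y` are the only
atoms of the interval `[C, T]`.  (Atoms are the elements covering the minimum `C`.) -/
theorem join_of_atoms_elementary {d : ℕ} (A : Finset (EucV d →ₗ[ℝ] ℝ))
    (hA : ∀ f ∈ A, f ≠ 0)
    (hSL : ∀ C₀ : Set (EucV d), IsChamber A C₀ → ∀ X Y : Set (EucV d),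
      IsChamber A X → IsChamber A Y →
      (∃ J : Set (EucV d), IsChamber A J ∧
        sepSet A C₀ X ⊆ sepSet A C₀ J ∧ sepSet A C₀ Y ⊆ sepSet A C₀ J ∧
        ∀ Z : Set (EucV d), IsChamber A Z → sepSet A C₀ X ⊆ sepSet A C₀ Z →
          sepSet A C₀ Y ⊆ sepSet A C₀ Z → sepSet A C₀ J ⊆ sepSet A C₀ Z) ∧
      (∃ M : Set (EucV d), IsChamber A M ∧
        sepSet A C₀ M ⊆ sepSet A C₀ X ∧ sepSet A C₀ M ⊆ sepSet A C₀ Y ∧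
        ∀ Z : Set (EucV d), IsChamber A Z → sepSet A C₀ Z ⊆ sepSet A C₀ X →
          sepSet A C₀ Z ⊆ sepSet A C₀ Y → sepSet A C₀ Z ⊆ sepSet A C₀ M))
    (C K X Y : Set (EucV d))
    (hC : IsChamber A C) (hK : IsChamber A K) (hX : IsChamber A X) (hY : IsChamber A Y)
    (hCK : sepSet A C C ⊆ sepSet A C K) (hXY : X ≠ Y)
    -- `X` and `Y` are atoms of the interval `[C, K]`:
    (hXatom : X ≠ C ∧ sepSet A C X ⊆ sepSet A C K ∧
      ¬ ∃ W : Set (EucV d), IsChamber A W ∧ W ≠ C ∧ W ≠ X ∧ sepSet A C W ⊆ sepSet A C X)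
    (hYatom : Y ≠ C ∧ sepSet A C Y ⊆ sepSet A C K ∧
      ¬ ∃ W : Set (EucV d), IsChamber A W ∧ W ≠ C ∧ W ≠ Y ∧ sepSet A C W ⊆ sepSet A C Y) :
    ∃ T : Set (EucV d), IsChamber A T ∧
      -- `T ∈ [C, K]`
      sepSet A C T ⊆ sepSet A C K ∧
      -- `T` is the join `X ∨ Y` in `P_C(A)`
      sepSet A C X ⊆ sepSet A C T ∧ sepSet A C Y ⊆ sepSet A C T ∧
      (∀ Z : Set (EucV d), IsChamber A Z → sepSet A C X ⊆ sepSet A C Z →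
        sepSet A C Y ⊆ sepSet A C Z → sepSet A C T ⊆ sepSet A C Z) ∧
      -- `X` and `Y` are the only atoms of `[C, T]`
      (∀ Z : Set (EucV d), IsChamber A Z →
        ((Z ≠ C ∧ sepSet A C Z ⊆ sepSet A C T ∧
          ¬ ∃ W : Set (EucV d), IsChamber A W ∧ W ≠ C ∧ W ≠ Z ∧
            sepSet A C W ⊆ sepSet A C Z) ↔ (Z = X ∨ Z = Y))) :=
  join_of_atoms_elementary_general A hSL C K X Y hC hK hX hY hXatom hYatom
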